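/- arXiv:2003.03883 — 3 statements merged into one kernel-verified Lean document; each statement's English description precedes it below -/
import Mathlib

section
/- Let M be a smooth manifold with a generalized k-contact structure given by 1-forms α₁,…,α_k and a splitting TM = I ⊕ F with dim I = k, where F = ⋂ ker αᵢ and ker(dαⱼ) = I for each j. Then for each j there is a unique vector field Xⱼ tangent to I with αᵢ(Xⱼ) = δᵢⱼ, and these Reeb vector fields pairwise commute: [Xᵢ, Xⱼ] = 0. -/
set_option maxHeartbeats 1000000


open VectorField

/-- in a vector-space/chart model of the manifold `M`: given a generalized
`k`-contact structure — `k` smooth 1-forms `α i`, a splitting `TM = I ⊕ F` with `dim I = k`,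
`F = ⋂ᵢ ker αᵢ`, and `ker (dαⱼ) = I` for every `j` — there exist unique Reeb vector fields
`Xⱼ` tangent to `I` with `αᵢ(Xⱼ) = δᵢⱼ`, and (when smooth) they pairwise commute:
`[Xᵢ, Xⱼ] = 0`. -/
theorem reeb_fields_exist_unique_and_commute
    {D : Type*} [NormedAddCommGroup D] [NormedSpace ℝ D] [FiniteDimensional ℝ D]
    (k : ℕ) (hk : 0 < k)
    (α : Fin k → D → (D →L[ℝ] ℝ))
    (hαsmooth : ∀ i, ContDiff ℝ (⊤ : ℕ∞) (α i))
    (I F : D → Submodule ℝ D)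
    (hsplit : ∀ x, IsCompl (I x) (F x))
    (hdimI : ∀ x, Module.finrank ℝ (I x) = k)
    (hF : ∀ x, F x = ⨅ i, LinearMap.ker (α i x : D →ₗ[ℝ] ℝ))
    -- `dα j x u v` is the exterior derivative of `α j` at `x`, evaluated on the (constant
    -- extensions of the) vectors `u`, `v`
    (dα : Fin k → D → D → D → ℝ)
    (hdα : ∀ j x u v, dα j x u v
      = fderiv ℝ (fun y => α j y v) x u - fderiv ℝ (fun y => α j y u) x v)
    (hker : ∀ j x, {u : D | ∀ v, dα j x u v = 0} = (I x : Set D)) :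
    (∃! X : Fin k → D → D,
      (∀ j x, X j x ∈ I x) ∧
      (∀ i j x, α i x (X j x) = if i = j then (1 : ℝ) else 0)) ∧
    (∀ X : Fin k → D → D,
      (∀ j x, X j x ∈ I x) →
      (∀ i j x, α i x (X j x) = if i = j then (1 : ℝ) else 0) →
      (∀ j, ContDiff ℝ (⊤ : ℕ∞) (X j)) →
      ∀ i j x, lieBracket ℝ (X i) (X j) x = 0) := by
  -- membership in `F` is characterized by vanishing of all `α i`
  have hFmem : ∀ x (u : D), u ∈ F x ↔ ∀ i, α i x u = 0 := by
    intro x u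
    rw [hF x]
    simp [Submodule.mem_iInf, LinearMap.mem_ker]
  -- an element of both `I x` and `F x` is zero
  have hIF : ∀ x (u : D), u ∈ I x → u ∈ F x → u = 0 := fun x u hu hu' =>
    Submodule.disjoint_def.mp (hsplit x).disjoint u hu hu'
  -- pointwise existence and uniqueness of the Reeb vectors
  have hpt : ∀ (j : Fin k) (x : D), ∃! u : D,
      u ∈ I x ∧ ∀ i, α i x u = if i = j then (1 : ℝ) else 0 := by
    intro j x
    -- the map `u ↦ (α i x u)_i`, restricted to `I x`
    set T : D →ₗ[ℝ] (Fin k → ℝ) := LinearMap.pi (fun i => (α i x : D →ₗ[ℝ] ℝ)) with hT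
    set Tr : (I x) →ₗ[ℝ] (Fin k → ℝ) := T.domRestrict (I x) with hTr
    have hinj : Function.Injective Tr := by
      rw [← LinearMap.ker_eq_bot]
      rw [Submodule.eq_bot_iff]
      rintro ⟨u, hu⟩ hu0
      have h0 : ∀ i, α i x u = 0 := by
        intro i
        have := congrFun (LinearMap.mem_ker.mp hu0) i
        simpa [hTr, hT, LinearMap.pi_apply] using this
      have : u = 0 := hIF x u hu ((hFmem x u).mpr h0)
      exact Subtype.ext this
    have hsurj : Function.Surjective Tr := by
      refine (LinearMap.injective_iff_surjective_of_finrank_eq_finrank ?_).mp hinj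
      rw [hdimI x, Module.finrank_fin_fun]
    obtain ⟨u, hu⟩ := hsurj (Pi.single j 1)
    refine ⟨u.1, ⟨u.2, ?_⟩, ?_⟩
    · intro i
      have : Tr u i = (Pi.single j 1 : Fin k → ℝ) i := by rw [hu]
      simpa [hTr, hT, LinearMap.pi_apply, Pi.single_apply] using this
    · rintro v ⟨hvI, hvα⟩
      have hd : v - u.1 ∈ I x := sub_mem hvI u.2
      have hdF : v - u.1 ∈ F x := by
        refine (hFmem x _).mpr fun i => ?_
        have h1 : α i x u.1 = if i = j then (1 : ℝ) else 0 := by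
          have : Tr u i = (Pi.single j 1 : Fin k → ℝ) i := by rw [hu]
          simpa [hTr, hT, LinearMap.pi_apply, Pi.single_apply] using this
        rw [map_sub, hvα i, h1, sub_self]
      exact sub_eq_zero.mp (hIF x _ hd hdF)
  constructor
  · -- existence and uniqueness of the family of Reeb fields
    choose X hXI hXα using fun j x => (hpt j x).exists
    refine ⟨X, ⟨hXI, fun i j x => hXα j x i⟩, ?_⟩
    rintro Y ⟨hYI, hYα⟩
    funext j x
    exact (hpt j x).unique ⟨hYI j x, fun i => hYα i j x⟩ ⟨hXI j x, fun i => hXα j x i⟩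
  · -- the commutation statement
    intro X hXI hXα hXs i j x
    have hαdiff : ∀ l, Differentiable ℝ (α l) := fun l => (hαsmooth l).differentiable (by simp)
    have hXdiff : ∀ m, Differentiable ℝ (X m) := fun m => (hXs m).differentiable (by simp)
    -- `G l` is the full derivative of `α l`
    set G : Fin k → D → (D →L[ℝ] (D →L[ℝ] ℝ)) := fun l => fderiv ℝ (α l) with hG
    have hGdiff : ∀ l, Differentiable ℝ (G l) := fun l =>
      ((hαsmooth l).fderiv_right (m := 1) (by exact WithTop.coe_le_coe.mpr le_top)).differentiable one_ne_zero
    -- the derivative of `y ↦ α l y v` for a fixed vector `v`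
    have hα_ev : ∀ l (x₀ : D) (v : D), fderiv ℝ (fun y => α l y v) x₀
        = (G l x₀).flip v := by
      intro l x₀ v
      rw [fderiv_clm_apply (hαdiff l x₀) (differentiableAt_const v)]
      simp
      rfl
    -- `dα` expressed through `G`
    have hdαG : ∀ l (x₀ u v : D), dα l x₀ u v = G l x₀ u v - G l x₀ v u := by
      intro l x₀ u v
      rw [hdα l x₀ u v, hα_ev, hα_ev]
      simp
    -- the kernel condition through `G`
    have hGker : ∀ l (x₀ u : D), u ∈ I x₀ → ∀ v, G l x₀ u v = G l x₀ v u := by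
      intro l x₀ u hu v
      have : u ∈ {u : D | ∀ v, dα l x₀ u v = 0} := by rw [hker l x₀]; exact hu
      have h0 := this v
      rw [hdαG] at h0
      linarith
    -- abbreviation for the candidate bracket value
    set Z : D := fderiv ℝ (X j) x (X i x) - fderiv ℝ (X i) x (X j x) with hZ
    -- derivative of the constant function `y ↦ α l y (X m y)`
    have hEqA : ∀ l m (x₀ w : D),
        α l x₀ (fderiv ℝ (X m) x₀ w) + G l x₀ w (X m x₀) = 0 := by
      intro l m x₀ w
      have hc : (fun y => α l y (X m y)) = fun _ => (if l = m then (1 : ℝ) else 0) :=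
        funext fun y => hXα l m y
      have h1 : fderiv ℝ (fun y => α l y (X m y)) x₀ = 0 := by
        rw [hc]; exact fderiv_const_apply _
      have h2 := fderiv_clm_apply (hαdiff l x₀) (hXdiff m x₀)
      rw [h1] at h2
      have := congrFun (congrArg (fun (f : D →L[ℝ] ℝ) => (f : D → ℝ)) h2.symm) w
      simpa using this
    -- Step A : `α l x Z = 0` for every `l`, so `Z ∈ F x`
    have hZF : Z ∈ F x := by
      refine (hFmem x Z).mpr fun l => ?_
      have h1 := hEqA l j x (X i x)
      have h2 := hEqA l i x (X j x)
      have h3 := hGker l x (X i x) (hXI i x) (X j x)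
      have : α l x Z = α l x (fderiv ℝ (X j) x (X i x))
          - α l x (fderiv ℝ (X i) x (X j x)) := by rw [hZ, map_sub]
      rw [this]
      linarith
    -- Step B : `Z ∈ I x`.  Fix any index `l`.
    have hZI : Z ∈ I x := by
      set l : Fin k := ⟨0, hk⟩
      -- second derivative of `α l` at `x`
      set H : D →L[ℝ] (D →L[ℝ] (D →L[ℝ] ℝ)) := fderiv ℝ (G l) x with hH
      have hsymm : ∀ a b : D, H a b = H b a := by
        intro a b
        exact second_derivative_symmetric
          (fun y => ((hαdiff l y).hasFDerivAt)) ((hGdiff l x).hasFDerivAt) a b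
      -- derivative of `y ↦ G l y (X m y)`
      have hf1 : ∀ m (w : D), fderiv ℝ (fun y => G l y (X m y)) x w
          = G l x (fderiv ℝ (X m) x w) + H w (X m x) := by
        intro m w
        rw [fderiv_clm_apply (hGdiff l x) (hXdiff m x)]
        simp [hH]
      -- the identity (†): differentiate `y ↦ G l y (X m y) v = G l y v (X m y)`
      have hdagger : ∀ m (w v : D),
          G l x (fderiv ℝ (X m) x w) v + H w (X m x) v
            = G l x v (fderiv ℝ (X m) x w) + H w v (X m x) := by
        intro m w v
        have hfun : (fun y => G l y (X m y) v) = (fun y => G l y v (X m y)) :=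
          funext fun y => hGker l y (X m y) (hXI m y) v
        have hL : fderiv ℝ (fun y => G l y (X m y) v) x w
            = G l x (fderiv ℝ (X m) x w) v + H w (X m x) v := by
          rw [fderiv_clm_apply
            ((hGdiff l x).clm_apply (hXdiff m x)) (differentiableAt_const v)]
          simp [hf1 m w]
        have hR : fderiv ℝ (fun y => G l y v (X m y)) x w
            = G l x v (fderiv ℝ (X m) x w) + H w v (X m x) := by
          have hc : DifferentiableAt ℝ (fun y => G l y v) x :=
            (hGdiff l x).clm_apply (differentiableAt_const v)
          rw [fderiv_clm_apply hc (hXdiff m x)]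
          have hcval : fderiv ℝ (fun y => G l y v) x
              = (fderiv ℝ (G l) x).flip v := by
            rw [fderiv_clm_apply (hGdiff l x) (differentiableAt_const v)]
            simp
          simp [hcval, hH]
        rw [hfun] at hL
        rw [hL] at hR
        linarith [hR]
      -- the identity (‡): differentiate `y ↦ G l y (X j y) (X i y) = G l y (X i y) (X j y)`
      have hddagger : ∀ v : D,
          G l x (X j x) (fderiv ℝ (X i) x v)
            + (G l x (fderiv ℝ (X j) x v) + H v (X j x)) (X i x)
          = G l x (X i x) (fderiv ℝ (X j) x v)
            + (G l x (fderiv ℝ (X i) x v) + H v (X i x)) (X j x) := by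
        intro v
        have hfun : (fun y => G l y (X j y) (X i y)) = (fun y => G l y (X i y) (X j y)) :=
          funext fun y => hGker l y (X j y) (hXI j y) (X i y)
        have hL : fderiv ℝ (fun y => G l y (X j y) (X i y)) x v
            = G l x (X j x) (fderiv ℝ (X i) x v)
              + (G l x (fderiv ℝ (X j) x v) + H v (X j x)) (X i x) := by
          rw [fderiv_clm_apply ((hGdiff l x).clm_apply (hXdiff j x)) (hXdiff i x)]
          simp [hf1 j v]
        have hR : fderiv ℝ (fun y => G l y (X i y) (X j y)) x v
            = G l x (X i x) (fderiv ℝ (X j) x v)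
              + (G l x (fderiv ℝ (X i) x v) + H v (X i x)) (X j x) := by
          rw [fderiv_clm_apply ((hGdiff l x).clm_apply (hXdiff i x)) (hXdiff j x)]
          simp [hf1 i v]
        rw [hfun] at hL
        rw [hL] at hR
        linarith [hR]
      -- now show `Z` is in the kernel of `dα l x`
      have hZker : ∀ v : D, dα l x Z v = 0 := by
        intro v
        rw [hdαG]
        have h1 := hdagger j (X i x) v
        have h2 := hdagger i (X j x) v
        have h3 := hddagger v
        -- symmetry facts
        have s1 : H (X i x) (X j x) v = H (X j x) (X i x) v := by
          rw [hsymm (X i x) (X j x)]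
        have s2 : H (X i x) v (X j x) = H v (X i x) (X j x) := by
          rw [hsymm (X i x) v]
        have s3 : H (X j x) v (X i x) = H v (X j x) (X i x) := by
          rw [hsymm (X j x) v]
        -- kernel facts at `x`
        have k1 : G l x (X i x) (fderiv ℝ (X j) x v)
            = G l x (fderiv ℝ (X j) x v) (X i x) :=
          hGker l x (X i x) (hXI i x) _
        have k2 : G l x (X j x) (fderiv ℝ (X i) x v)
            = G l x (fderiv ℝ (X i) x v) (X j x) :=
          hGker l x (X j x) (hXI j x) _
        have hz1 : G l x Z v = G l x (fderiv ℝ (X j) x (X i x)) v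
            - G l x (fderiv ℝ (X i) x (X j x)) v := by
          rw [hZ, map_sub]; simp
        have hz2 : G l x v Z = G l x v (fderiv ℝ (X j) x (X i x))
            - G l x v (fderiv ℝ (X i) x (X j x)) := by
          rw [hZ, map_sub]
        simp only [ContinuousLinearMap.add_apply] at h1 h2 h3
        rw [hz1, hz2]
        linarith
      have : Z ∈ {u : D | ∀ v, dα l x u v = 0} := hZker
      rw [hker l x] at this
      exact this
    have hZ0 : Z = 0 := hIF x Z hZI hZF
    simpa [VectorField.lieBracket, ← hZ] using hZ0
end

section
/- Let ψ : G × N → N be a smooth topologically transitive group action on a manifold N preserving a smooth splitting TN = E ⊕ F. Let Θ be a nowhere-vanishing ψ-invariant smooth section of Λ^{dim F} F*, and let α, β be ψ-invariant smooth sections of Λ^{dim E} E*. If α ∧ Θ is a volume form on N, then β ∧ Θ = C · (α ∧ Θ) for some constant C ∈ ℝ. -/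
noncomputable section

open scoped TensorProduct

/-- The wedge `a ∧ b` of two real-valued alternating forms, as an alternating form indexed by
the sum type. -/
def wedgeForm {F : Type*} [AddCommGroup F] [Module ℝ F]
    {ι₁ ι₂ : Type*} [DecidableEq ι₁] [DecidableEq ι₂] [Fintype ι₁] [Fintype ι₂]
    (a : F [⋀^ι₁]→ₗ[ℝ] ℝ) (b : F [⋀^ι₂]→ₗ[ℝ] ℝ) : F [⋀^(ι₁ ⊕ ι₂)]→ₗ[ℝ] ℝ :=
  (TensorProduct.lid ℝ ℝ).toLinearMap.compAlternatingMap (a.domCoprod b)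

section Aux
variable {F : Type*} [AddCommGroup F] [Module ℝ F]
    {ι₁ ι₂ : Type*} [DecidableEq ι₁] [DecidableEq ι₂] [Fintype ι₁] [Fintype ι₂]

lemma wedgeForm_apply_sum (a : F [⋀^ι₁]→ₗ[ℝ] ℝ) (b : F [⋀^ι₂]→ₗ[ℝ] ℝ) (w : ι₁ ⊕ ι₂ → F) :
    wedgeForm a b w = ∑ σ : Equiv.Perm.ModSumCongr ι₁ ι₂,
      (TensorProduct.lid ℝ ℝ) (AlternatingMap.domCoprod.summand a b σ w) := by
  simp [wedgeForm, AlternatingMap.domCoprod_apply, MultilinearMap.sum_apply]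

set_option synthInstance.maxHeartbeats 1000000 in
lemma wedgeForm_summand_eval (a : F [⋀^ι₁]→ₗ[ℝ] ℝ) (b : F [⋀^ι₂]→ₗ[ℝ] ℝ)
    (σ : Equiv.Perm (ι₁ ⊕ ι₂)) (w : ι₁ ⊕ ι₂ → F) :
    (TensorProduct.lid ℝ ℝ) (AlternatingMap.domCoprod.summand a b (Quotient.mk'' σ) w)
      = (Equiv.Perm.sign σ : ℤ) •
          ((a fun i => w (σ (Sum.inl i))) * b fun i => w (σ (Sum.inr i))) := by
  rw [AlternatingMap.domCoprod.summand_mk'']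
  rw [MultilinearMap.smul_apply, MultilinearMap.domDomCongr_apply,
    MultilinearMap.domCoprod_apply, Units.smul_def, map_zsmul]
  simp [TensorProduct.lid_tmul, smul_eq_mul]

lemma wedgeForm_comp (a : F [⋀^ι₁]→ₗ[ℝ] ℝ) (b : F [⋀^ι₂]→ₗ[ℝ] ℝ) (L : F →ₗ[ℝ] F)
    (w : ι₁ ⊕ ι₂ → F) :
    wedgeForm a b (fun i => L (w i))
      = wedgeForm (a.compLinearMap L) (b.compLinearMap L) w := by
  rw [wedgeForm_apply_sum, wedgeForm_apply_sum]
  refine Finset.sum_congr rfl fun σ _ => ?_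
  induction σ using Quotient.inductionOn' with
  | h σ =>
    rw [wedgeForm_summand_eval, wedgeForm_summand_eval]
    simp [AlternatingMap.compLinearMap_apply]

lemma wedgeForm_smul_right (a : F [⋀^ι₁]→ₗ[ℝ] ℝ) (b : F [⋀^ι₂]→ₗ[ℝ] ℝ) (c : ℝ) :
    wedgeForm a (c • b) = c • wedgeForm a b := by
  ext w
  rw [AlternatingMap.smul_apply, wedgeForm_apply_sum, wedgeForm_apply_sum, Finset.smul_sum]
  refine Finset.sum_congr rfl fun σ _ => ?_
  induction σ using Quotient.inductionOn' with
  | h σ =>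
    rw [wedgeForm_summand_eval, wedgeForm_summand_eval]
    simp only [AlternatingMap.smul_apply, smul_eq_mul, zsmul_eq_mul]
    ring

lemma wedgeForm_eval_continuous {X : Type*} [TopologicalSpace X] [TopologicalSpace F]
    (A : X → (F [⋀^ι₁]→ₗ[ℝ] ℝ)) (B : X → (F [⋀^ι₂]→ₗ[ℝ] ℝ))
    (hA : ∀ w : ι₁ → F, Continuous fun x => A x w)
    (hB : ∀ w : ι₂ → F, Continuous fun x => B x w)
    (w : ι₁ ⊕ ι₂ → F) : Continuous fun x => wedgeForm (A x) (B x) w := by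
  simp only [wedgeForm_apply_sum]
  refine continuous_finset_sum _ fun σ _ => ?_
  induction σ using Quotient.inductionOn' with
  | h σ =>
    simp only [wedgeForm_summand_eval, zsmul_eq_mul]
    exact continuous_const.mul ((hA _).mul (hB _))

end Aux

/-- in a vector-space/chart model: let `ψ` be a smooth, topologically
transitive action of a group `G` on `N` preserving a splitting `TN = E ⊕ F'`.  Let `Θ` be a
nowhere-vanishing invariant (up to a nowhere-zero factor `f`) section of `Λ^{dim F'} F'^*`,
and `α`, `β` invariant sections of `Λ^{dim E} E^*`.  If `α ∧ Θ` is a volume form, then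
`β ∧ Θ = C · (α ∧ Θ)` for some constant `C`. -/
theorem invariant_top_forms_proportional
    {F : Type*} [NormedAddCommGroup F] [NormedSpace ℝ F] [FiniteDimensional ℝ F]
    {G : Type*} [Group G]
    (dE dF : ℕ) (hdim : Module.finrank ℝ F = dE + dF)
    -- the action
    (ψ : G → F → F)
    (hψ1 : ∀ x, ψ 1 x = x)
    (hψmul : ∀ g h x, ψ (g * h) x = ψ g (ψ h x))
    (hψsmooth : ∀ g, ContDiff ℝ (⊤ : ℕ∞) (ψ g))
    -- the invariant splitting TN = E ⊕ F'
    (Esub Fsub : F → Submodule ℝ F)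
    (hcompl : ∀ x, IsCompl (Esub x) (Fsub x))
    (hErank : ∀ x, Module.finrank ℝ (Esub x) = dE)
    (hFrank : ∀ x, Module.finrank ℝ (Fsub x) = dF)
    (hEinv : ∀ g x, Submodule.map (fderiv ℝ (ψ g) x : F →ₗ[ℝ] F) (Esub x) ≤ Esub (ψ g x))
    (hFinv : ∀ g x, Submodule.map (fderiv ℝ (ψ g) x : F →ₗ[ℝ] F) (Fsub x) ≤ Fsub (ψ g x))
    -- topological transitivity
    (htrans : ∃ x₀, Dense (Set.range fun g => ψ g x₀))
    -- α, β : sections of Λ^{dE} E*  (forms on TN killed by F'), continuous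
    (α β : F → (F [⋀^(Fin dE)]→ₗ[ℝ] ℝ))
    (hαcont : ∀ w : Fin dE → F, Continuous fun x => α x w)
    (hβcont : ∀ w : Fin dE → F, Continuous fun x => β x w)
    (hαkill : ∀ x (w : Fin dE → F) (i : Fin dE), w i ∈ Fsub x → α x w = 0)
    (hβkill : ∀ x (w : Fin dE → F) (i : Fin dE), w i ∈ Fsub x → β x w = 0)
    -- Θ : a nowhere-vanishing section of Λ^{dF} F'^*, continuous
    (Θ : F → (F [⋀^(Fin dF)]→ₗ[ℝ] ℝ))
    (hΘcont : ∀ w : Fin dF → F, Continuous fun x => Θ x w)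
    (hΘkill : ∀ x (w : Fin dF → F) (i : Fin dF), w i ∈ Esub x → Θ x w = 0)
    (hΘne : ∀ x, Θ x ≠ 0)
    -- invariance: ψ_g* α = α, ψ_g* β = β, ψ_g* Θ = f_g · Θ with f nowhere zero
    (hαinv : ∀ g x (w : Fin dE → F),
      α (ψ g x) (fun i => fderiv ℝ (ψ g) x (w i)) = α x w)
    (hβinv : ∀ g x (w : Fin dE → F),
      β (ψ g x) (fun i => fderiv ℝ (ψ g) x (w i)) = β x w)
    (f : G → F → ℝ) (hf : ∀ g x, f g x ≠ 0)
    (hΘinv : ∀ g x (w : Fin dF → F),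
      Θ (ψ g x) (fun i => fderiv ℝ (ψ g) x (w i)) = f g x * Θ x w)
    -- α ∧ Θ is a volume form
    (hvol : ∀ x, wedgeForm (α x) (Θ x) ≠ 0) :
    ∃ C : ℝ, ∀ x, wedgeForm (β x) (Θ x) = C • wedgeForm (α x) (Θ x) := by
  classical
  obtain ⟨x₀, hx₀⟩ := htrans
  let e : Module.Basis (Fin dE ⊕ Fin dF) ℝ F :=
    (Module.finBasis ℝ F).reindex ((finCongr hdim).trans finSumFinEquiv.symm)
  set wα : F → ℝ := fun x => wedgeForm (α x) (Θ x) ⇑e with hwα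
  set wβ : F → ℝ := fun x => wedgeForm (β x) (Θ x) ⇑e with hwβ
  have hwα0 : ∀ x, wα x ≠ 0 := fun x =>
    (AlternatingMap.map_basis_ne_zero_iff e _).mpr (hvol x)
  set c : F → ℝ := fun x => wβ x / wα x with hc
  have hrepr : ∀ x, wedgeForm (β x) (Θ x) = c x • wedgeForm (α x) (Θ x) := by
    intro x
    have h1 := (wedgeForm (β x) (Θ x)).eq_smul_basis_det e
    have h2 := (wedgeForm (α x) (Θ x)).eq_smul_basis_det e
    rw [h1, h2, smul_smul]
    congr 1
    exact (div_mul_cancel₀ _ (hwα0 x)).symm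
  have hcontα : Continuous wα := wedgeForm_eval_continuous α Θ hαcont hΘcont ⇑e
  have hcontβ : Continuous wβ := wedgeForm_eval_continuous β Θ hβcont hΘcont ⇑e
  have hcontc : Continuous c := hcontβ.div hcontα hwα0
  have hkey : ∀ g x, c (ψ g x) = c x := by
    intro g x
    set y := ψ g x with hy
    set L : F →ₗ[ℝ] F := (fderiv ℝ (ψ g) x : F →ₗ[ℝ] F) with hL
    have hβL : (β y).compLinearMap L = β x := AlternatingMap.ext fun w => hβinv g x w
    have hαL : (α y).compLinearMap L = α x := AlternatingMap.ext fun w => hαinv g x w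
    have hΘL : (Θ y).compLinearMap L = f g x • Θ x := AlternatingMap.ext fun w => by
      rw [AlternatingMap.compLinearMap_apply, AlternatingMap.smul_apply, smul_eq_mul]
      exact hΘinv g x w
    set d : ℝ := e.det (fun i => L (e i)) with hd
    have eqβ : wβ y * d = f g x * wβ x := by
      have h1 : wedgeForm (β y) (Θ y) (fun i => L (e i)) = f g x * wβ x := by
        rw [wedgeForm_comp, hβL, hΘL, wedgeForm_smul_right]
        simp [hwβ, smul_eq_mul]
      have h2 : wedgeForm (β y) (Θ y) (fun i => L (e i)) = wβ y * d := by
        conv_lhs => rw [(wedgeForm (β y) (Θ y)).eq_smul_basis_det e]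
        simp [hwβ, hd, smul_eq_mul]
      rw [← h2, h1]
    have eqα : wα y * d = f g x * wα x := by
      have h1 : wedgeForm (α y) (Θ y) (fun i => L (e i)) = f g x * wα x := by
        rw [wedgeForm_comp, hαL, hΘL, wedgeForm_smul_right]
        simp [hwα, smul_eq_mul]
      have h2 : wedgeForm (α y) (Θ y) (fun i => L (e i)) = wα y * d := by
        conv_lhs => rw [(wedgeForm (α y) (Θ y)).eq_smul_basis_det e]
        simp [hwα, hd, smul_eq_mul]
      rw [← h2, h1]
    have hdne : d ≠ 0 := by
      intro h
      rw [h, mul_zero] at eqα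
      exact mul_ne_zero (hf g x) (hwα0 x) eqα.symm
    have hmain : wβ y * wα x = wβ x * wα y := by
      have h1 : wβ y * d * wα x = f g x * wβ x * wα x := by rw [eqβ]
      have h2 : wα y * d * wβ x = f g x * wα x * wβ x := by rw [eqα]
      have h3 : wβ y * d * wα x = wα y * d * wβ x := by rw [h1, h2]; ring
      have := mul_right_cancel₀ hdne (by linarith [h3] : wβ y * wα x * d = wβ x * wα y * d)
      exact this
    show c y = c x
    rw [hc]
    rw [div_eq_div_iff (hwα0 y) (hwα0 x)]
    exact hmain
  have hclosed : IsClosed {x | c x = c x₀} := isClosed_eq hcontc continuous_const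
  have hsub : Set.range (fun g => ψ g x₀) ⊆ {x | c x = c x₀} := by
    rintro _ ⟨g, rfl⟩
    exact hkey g x₀
  have hdense : Dense {x | c x = c x₀} := hx₀.mono hsub
  have hall : ∀ x, c x = c x₀ := by
    intro x
    have hx : x ∈ closure {x | c x = c x₀} := hdense x
    rwa [hclosed.closure_eq] at hx
  exact ⟨c x₀, fun x => by rw [hrepr x, hall x]⟩

end
end

section
/- Suppose the Lyapunov exponents χ₁,…,χ_r of a measure-preserving ℝ^k-action with an invariant continuous pseudo-Riemannian metric g (a (0,2)-tensor) satisfy: whenever g is non-zero on a pair of Oseledets subspaces E_{χᵢ} × E_{χⱼ}, then χᵢ + χⱼ = 0. Then the Lyapunov exponents occur in pairs (χ, −χ), and g pairs the corresponding Oseledets subspaces: g(E_{χᵢ}, E_{χⱼ}) = 0 unless χᵢ = −χⱼ. -/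
theorem LinearMap.SeparatingLeft.exists_mem_apply_ne_zero
    {R M₁ M₂ M : Type*} {ι : Sort*} [CommSemiring R]
    [AddCommMonoid M₁] [AddCommMonoid M₂] [AddCommMonoid M]
    [Module R M₁] [Module R M₂] [Module R M]
    {B : M₁ →ₗ[R] M₂ →ₗ[R] M} (hB : B.SeparatingLeft)
    {E : ι → Submodule R M₂} (hE : ⨆ j, E j = ⊤) {x : M₁} (hx : x ≠ 0) :
    ∃ j, ∃ y ∈ E j, B x y ≠ 0 := by
  by_contra! h
  have hker : ⨆ j, E j ≤ LinearMap.ker (B x) := iSup_le fun j y hy ↦ h j y hy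
  exact hx <| hB x fun y ↦ hker (hE ▸ Submodule.mem_top)

theorem lyapunov_exponents_paired_general
    {V : Type*} [AddCommGroup V] [Module ℝ V]
    {ι : Type*} [DecidableEq ι]
    (χ : ι → ℝ)
    (Esub : ι → Submodule ℝ V)
    (hinternal : DirectSum.IsInternal Esub)
    (hnontriv : ∀ i, Esub i ≠ ⊥)
    (g : LinearMap.BilinForm ℝ V) (hg : g.Nondegenerate)
    (hpair : ∀ i j : ι, (∃ u ∈ Esub i, ∃ v ∈ Esub j, g u v ≠ 0) → χ i + χ j = 0) :
    (∀ i : ι, ∃ j : ι, χ j = -χ i) ∧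
    (∀ i j : ι, χ i ≠ -χ j → ∀ u ∈ Esub i, ∀ v ∈ Esub j, g u v = 0) := by
  refine ⟨fun i ↦ ?_, fun i j hne u hu v hv ↦ ?_⟩
  · obtain ⟨u, hu, hu0⟩ := Submodule.exists_mem_ne_zero_of_ne_bot (hnontriv i)
    obtain ⟨j, v, hv, huv⟩ :=
      hg.1.exists_mem_apply_ne_zero hinternal.submodule_iSup_eq_top hu0
    exact ⟨j, by linarith [hpair i j ⟨u, hu, v, hv, huv⟩]⟩
  · by_contra huv
    exact hne (by linarith [hpair i j ⟨u, hu, v, hv, huv⟩])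

/-- Feres–Katok pairing: if a non-degenerate invariant pseudo-Riemannian
metric `g` (a (0,2)-tensor at a point) can only be non-zero on a pair of Oseledets subspaces
`E_{χᵢ} × E_{χⱼ}` when `χᵢ + χⱼ = 0`, then the Lyapunov exponents occur in pairs `(χ, −χ)`,
and `g` pairs the corresponding Oseledets subspaces: `g(E_{χᵢ}, E_{χⱼ}) = 0` unless
`χᵢ = −χⱼ`. -/
theorem lyapunov_exponents_paired
    {V : Type*} [AddCommGroup V] [Module ℝ V] [FiniteDimensional ℝ V]
    {ι : Type*} [Fintype ι] [DecidableEq ι]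
    (χ : ι → ℝ) (hχ : Function.Injective χ)
    (Esub : ι → Submodule ℝ V)
    (hinternal : DirectSum.IsInternal Esub)
    (hnontriv : ∀ i, Esub i ≠ ⊥)
    (g : LinearMap.BilinForm ℝ V) (hg : g.Nondegenerate)
    (hpair : ∀ i j : ι, (∃ u ∈ Esub i, ∃ v ∈ Esub j, g u v ≠ 0) → χ i + χ j = 0) :
    (∀ i : ι, ∃ j : ι, χ j = -χ i) ∧
    (∀ i j : ι, χ i ≠ -χ j → ∀ u ∈ Esub i, ∀ v ∈ Esub j, g u v = 0) :=
  lyapunov_exponents_paired_general χ Esub hinternal hnontriv g hg hpair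
end
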